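/- The s-dimensional Hausdorff measure of the ternary Cantor set equals 1, where s = log 2 / log 3. -/

import Mathlib

/-!
Upper bound: `preCantorSet n` is covered by `2 ^ n` intervals of length `3⁻¹ ^ n`, and
`2 ^ n * (3⁻¹ ^ n) ^ s = 1` because `3 ^ s = 2`.

Lower bound: since `s ≤ 1`, a countable cover can be fattened to an open one at an arbitrarily small
cost in `∑ diam ^ s`, and compactness reduces it to a finite open cover. By a Lebesgue number
argument, for `n` large each of the `2 ^ n` level-`n` intervals lies inside a member of the cover.
An interval of length `ℓ` contains at most `2 ^ n * ℓ ^ s` of them: if it meets both thirds of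
`[0, 1]` it contains the middle gap, and concavity of `x ↦ x ^ s` with `3 ^ s = 2` shows that the
gap pays for splitting it in two. Hence `2 ^ n ≤ 2 ^ n * ∑ diam ^ s`.
-/

open MeasureTheory Set Metric Real Filter Topology
open scoped ENNReal NNReal Finset

section OpenCovers

variable {X : Type*} [EMetricSpace X] {s : ℝ}

theorem exists_isOpen_superset_ediam_rpow_le (hs₀ : 0 < s) (hs₁ : s ≤ 1) (t : Set X)
    {ε : ℝ≥0} (hε : 0 < ε) : ∃ V, IsOpen V ∧ t ⊆ V ∧ ediam V ^ s ≤ ediam t ^ s + ε := by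
  set r : ℝ≥0 := ε ^ s⁻¹
  refine ⟨thickening (r / 2 : ℝ≥0) t, isOpen_thickening,
    self_subset_thickening (by positivity) t, ?_⟩
  have h2r : (2 * ((r / 2 : ℝ≥0) : ℝ≥0∞)) ^ s = ε := by
    rw [← ENNReal.coe_ofNat, ← ENNReal.coe_mul, mul_div_cancel₀ _ two_ne_zero,
      ← ENNReal.coe_rpow_of_nonneg _ hs₀.le, NNReal.rpow_inv_rpow hs₀.ne']
  calc ediam (thickening (r / 2 : ℝ≥0) t) ^ s
      ≤ (ediam t + 2 * ((r / 2 : ℝ≥0) : ℝ≥0∞)) ^ s :=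
        ENNReal.rpow_le_rpow (ediam_thickening_le _) hs₀.le
    _ ≤ ediam t ^ s + (2 * ((r / 2 : ℝ≥0) : ℝ≥0∞)) ^ s :=
        ENNReal.rpow_add_le_add_rpow _ _ hs₀.le hs₁
    _ = ediam t ^ s + ε := by rw [h2r]

theorem IsCompact.le_hausdorffMeasure_of_forall_finite_open_cover [MeasurableSpace X]
    [BorelSpace X] {K : Set X} (hK : IsCompact K) (hs₀ : 0 < s) (hs₁ : s ≤ 1) {m : ℝ≥0∞}
    (h : ∀ (F : Finset ℕ) (V : ℕ → Set X), (∀ i, IsOpen (V i)) → K ⊆ ⋃ i ∈ F, V i →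
      m ≤ ∑ i ∈ F, ediam (V i) ^ s) :
    m ≤ μH[s] K := by
  rw [Measure.hausdorffMeasure_apply]
  refine le_iSup₂_of_le 1 one_pos <| le_iInf₂ fun t hKt => le_iInf fun _ => ?_
  have hempty : ∀ n, ediam (t n) ^ s ≤ ⨆ _ : (t n).Nonempty, ediam (t n) ^ s := fun n => by
    rcases (t n).eq_empty_or_nonempty with hn | hn
    · simp [hn, ENNReal.zero_rpow_of_pos hs₀]
    · exact le_iSup_of_le hn le_rfl
  refine le_trans ?_ (ENNReal.tsum_le_tsum hempty)
  refine ENNReal.le_of_forall_pos_le_add fun ε hε _ => ?_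
  obtain ⟨ε', hε'0, hε'⟩ := ENNReal.exists_pos_sum_of_countable (ENNReal.coe_ne_zero.2 hε.ne') ℕ
  choose V hVo htV hV using fun n => exists_isOpen_superset_ediam_rpow_le hs₀ hs₁ (t n) (hε'0 n)
  obtain ⟨F, hF⟩ := hK.elim_finite_subcover V hVo (hKt.trans (iUnion_mono htV))
  calc m ≤ ∑ i ∈ F, ediam (V i) ^ s := h F V hVo hF
    _ ≤ ∑ i ∈ F, (ediam (t i) ^ s + ε' i) := Finset.sum_le_sum fun i _ => hV i
    _ = ∑ i ∈ F, ediam (t i) ^ s + ∑ i ∈ F, (ε' i : ℝ≥0∞) := Finset.sum_add_distrib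
    _ ≤ ∑' i, ediam (t i) ^ s + ∑' i, (ε' i : ℝ≥0∞) :=
        add_le_add (ENNReal.sum_le_tsum F) (ENNReal.sum_le_tsum F)
    _ ≤ ∑' i, ediam (t i) ^ s + ε := add_le_add_right hε'.le _

end OpenCovers

noncomputable def cantorEndpoints : ℕ → Finset ℝ
  | 0 => {0}
  | n + 1 => (cantorEndpoints n).image (· / 3) ∪ (cantorEndpoints n).image fun a => (2 + a) / 3

theorem cantorEndpoints_bounds {n : ℕ} {a : ℝ} (ha : a ∈ cantorEndpoints n) :
    0 ≤ a ∧ a + 3⁻¹ ^ n ≤ 1 := by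
  induction n generalizing a with
  | zero => simp_all [cantorEndpoints]
  | succ n ih =>
    simp only [cantorEndpoints, Finset.mem_union, Finset.mem_image] at ha
    rcases ha with ⟨b, hb, rfl⟩ | ⟨b, hb, rfl⟩ <;>
    · obtain ⟨h₀, h₁⟩ := ih hb
      constructor <;> [positivity; (rw [pow_succ]; linarith)]

theorem card_cantorEndpoints (n : ℕ) : #(cantorEndpoints n) = 2 ^ n := by
  induction n with
  | zero => rfl
  | succ n ih =>
    have hdisj : Disjoint ((cantorEndpoints n).image (· / 3))
        ((cantorEndpoints n).image fun a => (2 + a) / 3) := by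
      simp only [Finset.disjoint_left, Finset.mem_image]
      rintro _ ⟨a, ha, rfl⟩ ⟨b, hb, hab⟩
      linarith [cantorEndpoints_bounds ha, cantorEndpoints_bounds hb,
        pow_pos (by norm_num : (0 : ℝ) < 3⁻¹) n]
    rw [cantorEndpoints, Finset.card_union_of_disjoint hdisj,
      Finset.card_image_of_injective _ (fun x y h => by simpa using h),
      Finset.card_image_of_injective _ (fun x y h => by simpa using h), ih, pow_succ, mul_two]

theorem cantorEndpoints_subset_cantorSet (n : ℕ) : ↑(cantorEndpoints n) ⊆ cantorSet := by
  induction n with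
  | zero => simpa [cantorEndpoints] using zero_mem_cantorSet
  | succ n ih =>
    rw [cantorEndpoints, Finset.coe_union, Finset.coe_image, Finset.coe_image,
      cantorSet_eq_union_halves]
    exact union_subset_union (image_mono ih) (image_mono ih)

theorem preCantorSet_subset_biUnion (n : ℕ) :
    preCantorSet n ⊆ ⋃ a ∈ cantorEndpoints n, Icc a (a + 3⁻¹ ^ n) := by
  induction n with
  | zero => simp [cantorEndpoints]
  | succ n ih =>
    rintro _ (⟨x, hx, rfl⟩ | ⟨x, hx, rfl⟩) <;> obtain ⟨a, ha, hax, hxa⟩ := mem_iUnion₂.1 (ih hx)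
    · refine mem_iUnion₂.2 ⟨a / 3, Finset.mem_union_left _ (Finset.mem_image_of_mem _ ha), ?_, ?_⟩
      · linarith
      · rw [pow_succ]; linarith
    · refine mem_iUnion₂.2
        ⟨(2 + a) / 3, Finset.mem_union_right _ (Finset.mem_image_of_mem _ ha), ?_, ?_⟩
      · linarith
      · rw [pow_succ]; linarith

open Classical in
noncomputable def cantorCount (n : ℕ) (U : Set ℝ) : ℕ :=
  #{a ∈ cantorEndpoints n | Icc a (a + 3⁻¹ ^ n) ⊆ U}

theorem cantorCount_le_of_inter_subset {n : ℕ} {U V : Set ℝ} (h : U ∩ Icc 0 1 ⊆ V) :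
    cantorCount n U ≤ cantorCount n V := by
  classical
  refine Finset.card_le_card (Finset.monotone_filter_right _ fun a ha hU => ?_)
  obtain ⟨h₀, h₁⟩ := cantorEndpoints_bounds ha
  exact (subset_inter hU (Icc_subset_Icc h₀ h₁)).trans h

theorem le_of_cantorCount_Icc_ne_zero {n : ℕ} {c d : ℝ} (h : cantorCount n (Icc c d) ≠ 0) :
    c + 3⁻¹ ^ n ≤ d := by
  classical
  obtain ⟨a, ha⟩ := Finset.card_ne_zero.1 h
  have hsub := (Finset.mem_filter.1 ha).2
  rw [Icc_subset_Icc_iff (le_add_of_nonneg_right (by positivity))] at hsub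
  linarith [hsub.1, hsub.2]

theorem cantorCount_succ_Icc_le (n : ℕ) (c d : ℝ) :
    cantorCount (n + 1) (Icc c d) ≤
      cantorCount n (Icc (3 * c) (3 * d)) + cantorCount n (Icc (3 * c - 2) (3 * d - 2)) := by
  classical
  unfold cantorCount
  rw [cantorEndpoints, Finset.filter_union, Finset.filter_image, Finset.filter_image]
  refine (Finset.card_union_le _ _).trans (add_le_add ?_ ?_) <;>
  · refine Finset.card_image_le.trans (Finset.card_le_card (Finset.monotone_filter_right _ ?_))
    intro a _ ha
    rw [Icc_subset_Icc_iff (le_add_of_nonneg_right (by positivity))] at ha ⊢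
    rw [pow_succ] at ha
    constructor <;> linarith [ha.1, ha.2]

theorem logb_three_two_pos : 0 < logb 3 2 := logb_pos (by norm_num) (by norm_num)

theorem logb_three_two_le_one : logb 3 2 ≤ 1 :=
  (div_le_one (log_pos (by norm_num))).2 (log_le_log (by norm_num) (by norm_num))

theorem three_rpow_logb_three_two : (3 : ℝ) ^ logb 3 2 = 2 :=
  rpow_logb (by norm_num) (by norm_num) (by norm_num)

theorem rpow_add_rpow_le_rpow_add_add_one {a b : ℝ} (ha : 0 ≤ a) (hb : 0 ≤ b) (hab : a + b ≤ 2) :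
    a ^ logb 3 2 + b ^ logb 3 2 ≤ (a + b + 1) ^ logb 3 2 := by
  set s := logb 3 2
  have hmid : 2⁻¹ * a ^ s + 2⁻¹ * b ^ s ≤ (2⁻¹ * a + 2⁻¹ * b) ^ s :=
    (concaveOn_rpow logb_three_two_pos.le logb_three_two_le_one).2 ha hb
      (by norm_num) (by norm_num) (by norm_num)
  calc a ^ s + b ^ s = 3 ^ s * (2⁻¹ * a ^ s + 2⁻¹ * b ^ s) := by
        rw [three_rpow_logb_three_two]; ring
    _ ≤ 3 ^ s * (2⁻¹ * a + 2⁻¹ * b) ^ s := by gcongr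
    _ = (3 * (2⁻¹ * a + 2⁻¹ * b)) ^ s := (mul_rpow (by norm_num) (by positivity)).symm
    _ ≤ (a + b + 1) ^ s := rpow_le_rpow (by positivity) (by linarith) logb_three_two_pos.le

theorem cantorCount_thirds_le_of_ne_zero {n : ℕ}
    (ih : ∀ {c d : ℝ}, c ≤ d → (cantorCount n (Icc c d) : ℝ) ≤ 2 ^ n * (d - c) ^ logb 3 2)
    {c d : ℝ} (h₁ : cantorCount n (Icc (3 * c) (3 * d)) ≠ 0)
    (h₂ : cantorCount n (Icc (3 * c - 2) (3 * d - 2)) ≠ 0) :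
    (cantorCount n (Icc (3 * c) (3 * d)) + cantorCount n (Icc (3 * c - 2) (3 * d - 2)) : ℝ) ≤
      2 ^ n * (3 * (d - c)) ^ logb 3 2 := by
  set s := logb 3 2
  have hs : 0 ≤ s := logb_three_two_pos.le
  -- both thirds of `[0, 1]` meet `[c, d]`, so `[c, d]` contains the middle gap
  set c₁ := max (3 * c) 0
  set d₂ := min (3 * d - 2) 1
  have hN₁ : cantorCount n (Icc (3 * c) (3 * d)) ≤ cantorCount n (Icc c₁ 1) :=
    cantorCount_le_of_inter_subset fun x ⟨⟨h, _⟩, h₀, h₁⟩ => ⟨max_le h h₀, h₁⟩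
  have hN₂ : cantorCount n (Icc (3 * c - 2) (3 * d - 2)) ≤ cantorCount n (Icc 0 d₂) :=
    cantorCount_le_of_inter_subset fun x ⟨⟨_, h⟩, h₀, h₁⟩ => ⟨h₀, le_min h h₁⟩
  have hc₁ := le_of_cantorCount_Icc_ne_zero (n := n) (c := c₁) (d := 1) (by omega)
  have hd₂ := le_of_cantorCount_Icc_ne_zero (n := n) (c := 0) (d := d₂) (by omega)
  have hw : (0 : ℝ) < 3⁻¹ ^ n := by positivity
  have h3c : 3 * c ≤ c₁ := le_max_left _ _
  have h3d : d₂ ≤ 3 * d - 2 := min_le_left _ _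
  calc (cantorCount n (Icc (3 * c) (3 * d)) + cantorCount n (Icc (3 * c - 2) (3 * d - 2)) : ℝ)
      ≤ cantorCount n (Icc c₁ 1) + cantorCount n (Icc 0 d₂) := mod_cast add_le_add hN₁ hN₂
    _ ≤ 2 ^ n * (1 - c₁) ^ s + 2 ^ n * (d₂ - 0) ^ s :=
      add_le_add (ih (by linarith)) (ih (by linarith))
    _ = 2 ^ n * ((1 - c₁) ^ s + d₂ ^ s) := by rw [sub_zero, mul_add]
    _ ≤ 2 ^ n * ((1 - c₁) + d₂ + 1) ^ s := by
      gcongr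
      exact rpow_add_rpow_le_rpow_add_add_one (by linarith) (by linarith)
        (by linarith [le_max_right (3 * c) 0, min_le_right (3 * d - 2) 1])
    _ ≤ 2 ^ n * (3 * (d - c)) ^ s := by gcongr <;> linarith

theorem cantorCount_Icc_le (n : ℕ) {c d : ℝ} (hcd : c ≤ d) :
    (cantorCount n (Icc c d) : ℝ) ≤ 2 ^ n * (d - c) ^ logb 3 2 := by
  set s := logb 3 2
  have hs : 0 ≤ s := logb_three_two_pos.le
  induction n generalizing c d with
  | zero =>
    by_cases h : cantorCount 0 (Icc c d) = 0
    · rw [h, Nat.cast_zero]; positivity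
    have hle : cantorCount 0 (Icc c d) ≤ 1 := by
      classical exact Finset.card_filter_le _ _
    have hlen : 1 ≤ d - c := by linarith [le_of_cantorCount_Icc_ne_zero h, pow_zero (3⁻¹ : ℝ)]
    calc (cantorCount 0 (Icc c d) : ℝ) ≤ 1 := mod_cast hle
      _ ≤ (d - c) ^ s := one_le_rpow hlen hs
      _ = 2 ^ 0 * (d - c) ^ s := by rw [pow_zero, one_mul]
  | succ n ih =>
    have hbound : ∀ c' d', d' - c' ≤ 3 * (d - c) →
        (cantorCount n (Icc c' d') : ℝ) ≤ 2 ^ n * (3 * (d - c)) ^ s := by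
      intro c' d' hlen
      by_cases h : cantorCount n (Icc c' d') = 0
      · rw [h, Nat.cast_zero]; positivity
      have hc'd' : c' ≤ d' := by
        linarith [le_of_cantorCount_Icc_ne_zero h, pow_pos (by norm_num : (0 : ℝ) < 3⁻¹) n]
      exact (ih hc'd').trans (by gcongr)
    suffices (cantorCount (n + 1) (Icc c d) : ℝ) ≤ 2 ^ n * (3 * (d - c)) ^ s by
      rwa [mul_rpow (by norm_num) (by linarith), three_rpow_logb_three_two, ← mul_assoc,
        ← pow_succ] at this
    have hsplit := cantorCount_succ_Icc_le n c d
    by_cases h₁ : cantorCount n (Icc (3 * c) (3 * d)) = 0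
    · rw [h₁, zero_add] at hsplit
      exact (Nat.cast_le.2 hsplit).trans (hbound _ _ (by linarith))
    by_cases h₂ : cantorCount n (Icc (3 * c - 2) (3 * d - 2)) = 0
    · rw [h₂, add_zero] at hsplit
      exact (Nat.cast_le.2 hsplit).trans (hbound _ _ (by linarith))
    exact (Nat.cast_le.2 hsplit).trans
      (by push_cast; exact cantorCount_thirds_le_of_ne_zero ih h₁ h₂)

theorem cantorCount_le_two_pow_mul_ediam_rpow (n : ℕ) (U : Set ℝ) :
    (cantorCount n U : ℝ≥0∞) ≤ 2 ^ n * ediam U ^ logb 3 2 := by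
  have hs := logb_three_two_pos
  by_cases hU : Bornology.IsBounded U
  · have hlen := sub_nonneg.2 (Real.sInf_le_sSup U hU.bddBelow hU.bddAbove)
    have hsub : cantorCount n U ≤ cantorCount n (Icc (sInf U) (sSup U)) :=
      cantorCount_le_of_inter_subset (inter_subset_left.trans hU.subset_Icc_sInf_sSup)
    calc (cantorCount n U : ℝ≥0∞) ≤ ENNReal.ofReal (cantorCount n (Icc (sInf U) (sSup U))) := by
          rw [ENNReal.ofReal_natCast]; exact mod_cast hsub
      _ ≤ ENNReal.ofReal (2 ^ n * (sSup U - sInf U) ^ logb 3 2) :=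
          ENNReal.ofReal_le_ofReal (cantorCount_Icc_le n (by linarith))
      _ = 2 ^ n * ediam U ^ logb 3 2 := by
          rw [ENNReal.ofReal_mul (by positivity), ENNReal.ofReal_pow zero_le_two,
            ENNReal.ofReal_ofNat, Real.ediam_eq hU, ENNReal.ofReal_rpow_of_nonneg hlen hs.le]
  · rw [ediam_eq_top_iff_unbounded.2 hU, ENNReal.top_rpow_of_pos hs, ENNReal.mul_top (by simp)]
    exact le_top

theorem one_le_sum_ediam_rpow_of_cantorSet_subset (F : Finset ℕ) (V : ℕ → Set ℝ)
    (hV : ∀ i, IsOpen (V i)) (hcov : cantorSet ⊆ ⋃ i ∈ F, V i) :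
    1 ≤ ∑ i ∈ F, ediam (V i) ^ logb 3 2 := by
  classical
  obtain ⟨δ, hδ, hball⟩ := lebesgue_number_lemma_of_metric (c := fun i : F => V i)
    isCompact_cantorSet (fun i => hV i) (by simpa only [iUnion_subtype] using hcov)
  obtain ⟨n, hn⟩ := exists_pow_lt_of_lt_one hδ (by norm_num : (3 : ℝ)⁻¹ < 1)
  have hfit : cantorEndpoints n ⊆
      F.biUnion fun i => {a ∈ cantorEndpoints n | Icc a (a + 3⁻¹ ^ n) ⊆ V i} := by
    intro a ha
    obtain ⟨i, hi⟩ := hball a (cantorEndpoints_subset_cantorSet n ha)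
    refine Finset.mem_biUnion.2 ⟨i, i.2, Finset.mem_filter.2 ⟨ha, fun x hx => hi ?_⟩⟩
    rw [mem_ball, Real.dist_eq, abs_lt]
    constructor <;> linarith [hx.1, hx.2, pow_pos (by norm_num : (0 : ℝ) < 3⁻¹) n]
  have hcount : 2 ^ n ≤ ∑ i ∈ F, cantorCount n (V i) := by
    rw [← card_cantorEndpoints]
    exact (Finset.card_le_card hfit).trans Finset.card_biUnion_le
  have hpow : (2 : ℝ≥0∞) ^ n * 1 ≤ 2 ^ n * ∑ i ∈ F, ediam (V i) ^ logb 3 2 := calc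
    (2 : ℝ≥0∞) ^ n * 1 ≤ ∑ i ∈ F, (cantorCount n (V i) : ℝ≥0∞) := by
        rw [mul_one]; exact_mod_cast hcount
    _ ≤ ∑ i ∈ F, 2 ^ n * ediam (V i) ^ logb 3 2 :=
        Finset.sum_le_sum fun i _ => cantorCount_le_two_pow_mul_ediam_rpow n (V i)
    _ = 2 ^ n * ∑ i ∈ F, ediam (V i) ^ logb 3 2 := (Finset.mul_sum _ _ _).symm
  exact (ENNReal.mul_le_mul_iff_right (by simp) (by simp)).1 hpow

theorem sum_ediam_rpow_cantorIntervals (n : ℕ) :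
    ∑ a : cantorEndpoints n, ediam (Icc (a : ℝ) (a + 3⁻¹ ^ n)) ^ logb 3 2 = 1 := by
  have hlen (a : ℝ) : ediam (Icc a (a + 3⁻¹ ^ n)) ^ logb 3 2 = ENNReal.ofReal (2⁻¹ ^ n) := by
    rw [Real.ediam_Icc, add_sub_cancel_left,
      ENNReal.ofReal_rpow_of_nonneg (by positivity) logb_three_two_pos.le,
      ← rpow_pow_comm (by norm_num), inv_rpow (by norm_num), three_rpow_logb_three_two]
  calc ∑ a : cantorEndpoints n, ediam (Icc (a : ℝ) (a + 3⁻¹ ^ n)) ^ logb 3 2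
      = ∑ _a : cantorEndpoints n, ENNReal.ofReal (2⁻¹ ^ n) :=
        Finset.sum_congr rfl fun a _ => hlen a
    _ = 2 ^ n * ENNReal.ofReal (2⁻¹ ^ n) := by
      rw [Finset.sum_const, Finset.card_univ, Fintype.card_coe, card_cantorEndpoints,
        nsmul_eq_mul, Nat.cast_pow, Nat.cast_ofNat]
    _ = 1 := by
      rw [← ENNReal.ofReal_ofNat, ← ENNReal.ofReal_pow zero_le_two,
        ← ENNReal.ofReal_mul (by positivity), ← mul_pow, mul_inv_cancel₀ two_ne_zero, one_pow,
        ENNReal.ofReal_one]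

theorem hausdorffMeasure_cantorSet_le_one : μH[logb 3 2] cantorSet ≤ 1 := by
  have hlen : Tendsto (fun n : ℕ => ENNReal.ofReal (3⁻¹ ^ n)) atTop (𝓝 0) := by
    simpa using ENNReal.tendsto_ofReal
      (tendsto_pow_atTop_nhds_zero_of_lt_one (by norm_num) (by norm_num : (3 : ℝ)⁻¹ < 1))
  have hcover (n : ℕ) : cantorSet ⊆ ⋃ a : cantorEndpoints n, Icc (a : ℝ) (a + 3⁻¹ ^ n) := by
    rw [iUnion_subtype]
    exact (iInter_subset _ n).trans (preCantorSet_subset_biUnion n)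
  calc μH[logb 3 2] cantorSet
      ≤ liminf (fun n => ∑ a : cantorEndpoints n, ediam (Icc (a : ℝ) (a + 3⁻¹ ^ n)) ^ logb 3 2)
          atTop :=
        Measure.hausdorffMeasure_le_liminf_sum _ _ _ hlen _
          (.of_forall fun n a => by rw [Real.ediam_Icc, add_sub_cancel_left]) (.of_forall hcover)
    _ = 1 := by simp only [sum_ediam_rpow_cantorIntervals, liminf_const]

theorem one_le_hausdorffMeasure_cantorSet : 1 ≤ μH[logb 3 2] cantorSet :=
  isCompact_cantorSet.le_hausdorffMeasure_of_forall_finite_open_cover logb_three_two_pos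
    logb_three_two_le_one one_le_sum_ediam_rpow_of_cantorSet_subset

theorem hausdorff_measure_cantorSet :
    μH[Real.log 2 / Real.log 3] cantorSet = 1 :=
  le_antisymm hausdorffMeasure_cantorSet_le_one one_le_hausdorffMeasure_cantorSet
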